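/- arXiv:2111.03010 — 3 statements merged into one kernel-verified Lean document; each statement's English description precedes it below -/
import Mathlib

section
/- Let R be a min-linear fuzzy preference on X (i.e., T-linear for the t-norm T = min) and x, y, z ∈ X. If x ≿_R y and y ≿_R z, then R(z,x) = min{R(z,y), R(y,x)}. In particular, the degrees between consecutive alternatives in the associated total preorder determine the whole preference. -/
open unitInterval

/-- A t-norm on the unit interval: commutative, associative, monotone, with 1 as neutral element. -/
def IsTnorm (T : I → I → I) : Prop :=
  (∀ a b, T a b = T b a) ∧
  (∀ a b c, T (T a b) c = T a (T b c)) ∧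
  (∀ a b c d, a ≤ b → c ≤ d → T a c ≤ T b d) ∧
  (∀ a, T a 1 = a)

/-- A fuzzy preference `R` is reflexive. -/
def FuzzyRefl {X : Type*} (R : X → X → I) : Prop := ∀ x, R x x = 1

/-- A fuzzy preference `R` is `T`-transitive. -/
def FuzzyTrans {X : Type*} (T : I → I → I) (R : X → X → I) : Prop :=
  ∀ x y z, T (R x y) (R y z) ≤ R x z

/-- A fuzzy preference `R` is complete. -/
def FuzzyComplete {X : Type*} (R : X → X → I) : Prop := ∀ x y, R x y = 1 ∨ R y x = 1

/-- A `T`-linear fuzzy preference: reflexive, complete and `T`-transitive. -/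
def IsLinearPref {X : Type*} (T : I → I → I) (R : X → X → I) : Prop :=
  FuzzyRefl R ∧ FuzzyComplete R ∧ FuzzyTrans T R

/-- For a `min`-linear fuzzy preference, if `x ≿_R y ≿_R z`, then
`R(z,x) = min{R(z,y), R(y,x)}`. -/
theorem min_linear_degree_eq {X : Type*}
    (R : X → X → I) (hR : IsLinearPref (fun a b => min a b) R) (x y z : X)
    (hxy : R x y = 1) (hyz : R y z = 1) :
    R z x = min (R z y) (R y x) := by
  obtain ⟨-, -, htrans⟩ := hR
  apply le_antisymm
  · refine le_min ?_ ?_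
    · have := htrans z x y
      simp only [hxy] at this
      rwa [min_eq_left le_one'] at this
    · have := htrans y z x
      simp only [hyz] at this
      rwa [min_eq_right le_one'] at this
  · exact htrans z y x
end

section
/- Let X have at least 3 elements, T a t-norm, N a nonempty society, and f an aggregation function on LP_T satisfying independence of irrelevant alternatives and weak Pareto. Then for every pair of profiles 𝐑, 𝐑' ∈ LP_T^N and alternatives a, b, x, y ∈ X: if for every i ∈ N, R_i(x,y) = R'_i(a,b), R_i(y,x) = R'_i(b,a) and min{R_i(x,y), R_i(y,x)} < 1, then f(𝐑)(x,y) = f(𝐑')(a,b) and f(𝐑)(y,x) = f(𝐑')(b,a). -/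
open unitInterval

/-- The set of `T`-linear preferences on `X`. -/
def LinPref (T : I → I → I) (X : Type*) := {R : X → X → I // IsLinearPref T R}

/-- The strict part of the associated preorder of `R`: `x ≻_R y` iff `R x y = 1` and `R y x < 1`. -/
def SP {X : Type*} (R : X → X → I) (x y : X) : Prop := R x y = 1 ∧ R y x < 1

/-- Independence of irrelevant alternatives for an aggregation function. -/
def IIA {X N : Type*} {T : I → I → I} (f : (N → LinPref T X) → LinPref T X) : Prop :=
  ∀ (R R' : N → LinPref T X) (x y : X),
    (∀ i, (R i).1 x y = (R' i).1 x y ∧ (R i).1 y x = (R' i).1 y x) →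
    (f R).1 x y = (f R').1 x y ∧ (f R).1 y x = (f R').1 y x

/-- Weak Pareto: if every individual strictly prefers `x` to `y`
(`R_i(x,y) > R_i(y,x)`), so does the society. -/
def WeakPareto {X N : Type*} {T : I → I → I} (f : (N → LinPref T X) → LinPref T X) : Prop :=
  ∀ (R : N → LinPref T X) (x y : X),
    (∀ i, (R i).1 y x < (R i).1 x y) → (f R).1 y x < (f R).1 x y

/-- A coalition `C` is decisive for `f`. -/
def Decisive {X N : Type*} {T : I → I → I} (f : (N → LinPref T X) → LinPref T X)
    (C : Set N) : Prop :=
  ∀ (x y : X) (R : N → LinPref T X),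
    (∀ i ∈ C, SP (R i).1 x y) → (∀ i ∈ Cᶜ, SP (R i).1 y x) → SP (f R).1 x y

lemma T_le_left {T : I → I → I} (hT : IsTnorm T) (a b : I) : T a b ≤ a := by
  have := hT.2.2.1 a a b 1 le_rfl le_one'
  rwa [hT.2.2.2] at this

lemma T_one_left {T : I → I → I} (hT : IsTnorm T) (a : I) : T 1 a = a := by
  rw [hT.1, hT.2.2.2]

lemma T_le_right {T : I → I → I} (hT : IsTnorm T) (a b : I) : T a b ≤ b := by
  rw [hT.1]; exact T_le_left hT b a

noncomputable def rankPref (T : I → I → I) (hT : IsTnorm T) {X : Type*} (r : X → ℕ) (c : I) :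
    LinPref T X :=
  ⟨fun u v => if r u ≤ r v then 1 else c, by
    refine ⟨fun u => if_pos le_rfl, fun u v => ?_, fun u v w => ?_⟩
    · rcases le_total (r u) (r v) with h | h
      · exact Or.inl (if_pos h)
      · exact Or.inr (if_pos h)
    · show T (if r u ≤ r v then 1 else c) (if r v ≤ r w then 1 else c) ≤
          (if r u ≤ r w then 1 else c)
      by_cases huw : r u ≤ r w
      · rw [if_pos huw]; exact le_one'
      · rw [if_neg huw]
        by_cases huv : r u ≤ r v
        · have hvw : ¬ r v ≤ r w := fun hvw => huw (huv.trans hvw)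
          rw [if_neg hvw]
          exact T_le_right hT _ _
        · rw [if_neg huv]
          exact T_le_left hT _ _⟩

@[simp] lemma rankPref_apply {T : I → I → I} (hT : IsTnorm T) {X : Type*} (r : X → ℕ) (c : I)
    (u v : X) : (rankPref T hT r c).1 u v = if r u ≤ r v then 1 else c := rfl

open Classical in
noncomputable def rk3 {X : Type*} (a b c : X) : X → ℕ :=
  fun u => if u = a then 0 else if u = b then 1 else if u = c then 2 else 2

lemma dichot {X : Type*} {T : I → I → I} (Ri : LinPref T X) {x y : X}
    (h : min (Ri.1 x y) (Ri.1 y x) < 1) :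
    (Ri.1 x y = 1 ∧ Ri.1 y x < 1) ∨ (Ri.1 y x = 1 ∧ Ri.1 x y < 1) := by
  rcases Ri.2.2.1 x y with h1 | h1
  · exact Or.inl ⟨h1, by rwa [h1, min_eq_right le_one'] at h⟩
  · exact Or.inr ⟨h1, by rwa [h1, min_eq_left le_one'] at h⟩

lemma soc_one {X : Type*} {T : I → I → I} {G : LinPref T X} {u v : X}
    (h : G.1 v u < G.1 u v) : G.1 u v = 1 := by
  rcases G.2.2.1 u v with h1 | h1
  · exact h1
  · rw [h1] at h; exact absurd le_one' h.not_ge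

lemma baseA {X N : Type*} {T : I → I → I} (hT : IsTnorm T)
    (f : (N → LinPref T X) → LinPref T X) (hIIA : IIA f) (hWP : WeakPareto f)
    (R R' : N → LinPref T X) (x y b : X) (hxy : x ≠ y) (hxb : x ≠ b) (hyb : y ≠ b)
    (h : ∀ i, (R i).1 x y = (R' i).1 x b ∧ (R i).1 y x = (R' i).1 b x ∧
      min ((R i).1 x y) ((R i).1 y x) < 1) :
    (f R).1 x y = (f R').1 x b ∧ (f R).1 y x = (f R').1 b x := by
  classical
  set S : N → LinPref T X := fun i =>
    if (R i).1 x y = 1 then rankPref T hT (rk3 x y b) ((R i).1 y x)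
    else rankPref T hT (rk3 y b x) ((R i).1 x y) with hSdef
  have hS : ∀ i, ((S i).1 x y = (R i).1 x y ∧ (S i).1 y x = (R i).1 y x) ∧
      ((S i).1 x b = (R' i).1 x b ∧ (S i).1 b x = (R' i).1 b x) ∧
      (S i).1 b y < (S i).1 y b := by
    intro i
    obtain ⟨h1, h2, h3⟩ := h i
    rcases dichot (R i) h3 with ⟨hp, hq⟩ | ⟨hq, hp⟩
    · have hSi : S i = rankPref T hT (rk3 x y b) ((R i).1 y x) := by
        simp only [hSdef]; rw [if_pos hp]
      rw [hSi]
      refine ⟨⟨?_, ?_⟩, ⟨?_, ?_⟩, ?_⟩ <;>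
        simp [rk3, hxy, hxb, hyb, Ne.symm hxy, Ne.symm hxb, Ne.symm hyb, hp, hq, ← h1, ← h2]
    · have hSi : S i = rankPref T hT (rk3 y b x) ((R i).1 x y) := by
        simp only [hSdef]; rw [if_neg hp.ne]
      rw [hSi]
      refine ⟨⟨?_, ?_⟩, ⟨?_, ?_⟩, ?_⟩ <;>
        simp [rk3, hxy, hxb, hyb, Ne.symm hxy, Ne.symm hxb, Ne.symm hyb, hp, hq, ← h1, ← h2]
  set S' : N → LinPref T X := fun i =>
    if (R i).1 x y = 1 then rankPref T hT (rk3 x b y) ((R i).1 y x)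
    else rankPref T hT (rk3 b y x) ((R i).1 x y) with hS'def
  have hS' : ∀ i, ((S' i).1 x y = (R i).1 x y ∧ (S' i).1 y x = (R i).1 y x) ∧
      ((S' i).1 x b = (R' i).1 x b ∧ (S' i).1 b x = (R' i).1 b x) ∧
      (S' i).1 y b < (S' i).1 b y := by
    intro i
    obtain ⟨h1, h2, h3⟩ := h i
    rcases dichot (R i) h3 with ⟨hp, hq⟩ | ⟨hq, hp⟩
    · have hSi : S' i = rankPref T hT (rk3 x b y) ((R i).1 y x) := by
        simp only [hS'def]; rw [if_pos hp]
      rw [hSi]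
      refine ⟨⟨?_, ?_⟩, ⟨?_, ?_⟩, ?_⟩ <;>
        simp [rk3, hxy, hxb, hyb, Ne.symm hxy, Ne.symm hxb, Ne.symm hyb, hp, hq, ← h1, ← h2]
    · have hSi : S' i = rankPref T hT (rk3 b y x) ((R i).1 x y) := by
        simp only [hS'def]; rw [if_neg hp.ne]
      rw [hSi]
      refine ⟨⟨?_, ?_⟩, ⟨?_, ?_⟩, ?_⟩ <;>
        simp [rk3, hxy, hxb, hyb, Ne.symm hxy, Ne.symm hxb, Ne.symm hyb, hp, hq, ← h1, ← h2]
  -- society facts for S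
  have eR : (f S).1 x y = (f R).1 x y ∧ (f S).1 y x = (f R).1 y x :=
    hIIA S R x y fun i => (hS i).1
  have eR' : (f S).1 x b = (f R').1 x b ∧ (f S).1 b x = (f R').1 b x :=
    hIIA S R' x b fun i => (hS i).2.1
  have hyb1 : (f S).1 y b = 1 := soc_one (hWP S y b fun i => (hS i).2.2)
  have t1 : (f S).1 x y ≤ (f S).1 x b := by
    have := (f S).2.2.2 x y b
    rwa [hyb1, hT.2.2.2] at this
  have t2 : (f S).1 b x ≤ (f S).1 y x := by
    have := (f S).2.2.2 y b x
    rwa [hyb1, T_one_left hT] at this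
  -- society facts for S'
  have e'R : (f S').1 x y = (f R).1 x y ∧ (f S').1 y x = (f R).1 y x :=
    hIIA S' R x y fun i => (hS' i).1
  have e'R' : (f S').1 x b = (f R').1 x b ∧ (f S').1 b x = (f R').1 b x :=
    hIIA S' R' x b fun i => (hS' i).2.1
  have hby1 : (f S').1 b y = 1 := soc_one (hWP S' b y fun i => (hS' i).2.2)
  have t3 : (f S').1 x b ≤ (f S').1 x y := by
    have := (f S').2.2.2 x b y
    rwa [hby1, hT.2.2.2] at this
  have t4 : (f S').1 y x ≤ (f S').1 b x := by
    have := (f S').2.2.2 b y x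
    rwa [hby1, T_one_left hT] at this
  constructor
  · exact le_antisymm (by rw [← eR.1, ← eR'.1]; exact t1) (by rw [← e'R.1, ← e'R'.1]; exact t3)
  · exact le_antisymm (by rw [← e'R.2, ← e'R'.2]; exact t4) (by rw [← eR.2, ← eR'.2]; exact t2)

lemma baseB {X N : Type*} {T : I → I → I} (hT : IsTnorm T)
    (f : (N → LinPref T X) → LinPref T X) (hIIA : IIA f) (hWP : WeakPareto f)
    (R R' : N → LinPref T X) (x y a : X) (hxy : x ≠ y) (hax : a ≠ x) (hay : a ≠ y)
    (h : ∀ i, (R i).1 x y = (R' i).1 a y ∧ (R i).1 y x = (R' i).1 y a ∧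
      min ((R i).1 x y) ((R i).1 y x) < 1) :
    (f R).1 x y = (f R').1 a y ∧ (f R).1 y x = (f R').1 y a := by
  classical
  set S : N → LinPref T X := fun i =>
    if (R i).1 x y = 1 then rankPref T hT (rk3 a x y) ((R i).1 y x)
    else rankPref T hT (rk3 y a x) ((R i).1 x y) with hSdef
  have hS : ∀ i, ((S i).1 x y = (R i).1 x y ∧ (S i).1 y x = (R i).1 y x) ∧
      ((S i).1 a y = (R' i).1 a y ∧ (S i).1 y a = (R' i).1 y a) ∧
      (S i).1 x a < (S i).1 a x := by
    intro i
    obtain ⟨h1, h2, h3⟩ := h i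
    rcases dichot (R i) h3 with ⟨hp, hq⟩ | ⟨hq, hp⟩
    · have hSi : S i = rankPref T hT (rk3 a x y) ((R i).1 y x) := by
        simp only [hSdef]; rw [if_pos hp]
      rw [hSi]
      refine ⟨⟨?_, ?_⟩, ⟨?_, ?_⟩, ?_⟩ <;>
        simp [rk3, hxy, hax, hay, Ne.symm hxy, Ne.symm hax, Ne.symm hay, hp, hq, ← h1, ← h2]
    · have hSi : S i = rankPref T hT (rk3 y a x) ((R i).1 x y) := by
        simp only [hSdef]; rw [if_neg hp.ne]
      rw [hSi]
      refine ⟨⟨?_, ?_⟩, ⟨?_, ?_⟩, ?_⟩ <;>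
        simp [rk3, hxy, hax, hay, Ne.symm hxy, Ne.symm hax, Ne.symm hay, hp, hq, ← h1, ← h2]
  set S' : N → LinPref T X := fun i =>
    if (R i).1 x y = 1 then rankPref T hT (rk3 x a y) ((R i).1 y x)
    else rankPref T hT (rk3 y x a) ((R i).1 x y) with hS'def
  have hS' : ∀ i, ((S' i).1 x y = (R i).1 x y ∧ (S' i).1 y x = (R i).1 y x) ∧
      ((S' i).1 a y = (R' i).1 a y ∧ (S' i).1 y a = (R' i).1 y a) ∧
      (S' i).1 a x < (S' i).1 x a := by
    intro i
    obtain ⟨h1, h2, h3⟩ := h i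
    rcases dichot (R i) h3 with ⟨hp, hq⟩ | ⟨hq, hp⟩
    · have hSi : S' i = rankPref T hT (rk3 x a y) ((R i).1 y x) := by
        simp only [hS'def]; rw [if_pos hp]
      rw [hSi]
      refine ⟨⟨?_, ?_⟩, ⟨?_, ?_⟩, ?_⟩ <;>
        simp [rk3, hxy, hax, hay, Ne.symm hxy, Ne.symm hax, Ne.symm hay, hp, hq, ← h1, ← h2]
    · have hSi : S' i = rankPref T hT (rk3 y x a) ((R i).1 x y) := by
        simp only [hS'def]; rw [if_neg hp.ne]
      rw [hSi]
      refine ⟨⟨?_, ?_⟩, ⟨?_, ?_⟩, ?_⟩ <;>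
        simp [rk3, hxy, hax, hay, Ne.symm hxy, Ne.symm hax, Ne.symm hay, hp, hq, ← h1, ← h2]
  have eR : (f S).1 x y = (f R).1 x y ∧ (f S).1 y x = (f R).1 y x :=
    hIIA S R x y fun i => (hS i).1
  have eR' : (f S).1 a y = (f R').1 a y ∧ (f S).1 y a = (f R').1 y a :=
    hIIA S R' a y fun i => (hS i).2.1
  have hax1 : (f S).1 a x = 1 := soc_one (hWP S a x fun i => (hS i).2.2)
  have t1 : (f S).1 x y ≤ (f S).1 a y := by
    have := (f S).2.2.2 a x y
    rwa [hax1, T_one_left hT] at this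
  have t2 : (f S).1 y a ≤ (f S).1 y x := by
    have := (f S).2.2.2 y a x
    rwa [hax1, hT.2.2.2] at this
  have e'R : (f S').1 x y = (f R).1 x y ∧ (f S').1 y x = (f R).1 y x :=
    hIIA S' R x y fun i => (hS' i).1
  have e'R' : (f S').1 a y = (f R').1 a y ∧ (f S').1 y a = (f R').1 y a :=
    hIIA S' R' a y fun i => (hS' i).2.1
  have hxa1 : (f S').1 x a = 1 := soc_one (hWP S' x a fun i => (hS' i).2.2)
  have t3 : (f S').1 a y ≤ (f S').1 x y := by
    have := (f S').2.2.2 x a y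
    rwa [hxa1, T_one_left hT] at this
  have t4 : (f S').1 y x ≤ (f S').1 y a := by
    have := (f S').2.2.2 y x a
    rwa [hxa1, hT.2.2.2] at this
  constructor
  · exact le_antisymm (by rw [← eR.1, ← eR'.1]; exact t1) (by rw [← e'R.1, ← e'R'.1]; exact t3)
  · exact le_antisymm (by rw [← e'R.2, ← e'R'.2]; exact t4) (by rw [← eR.2, ← eR'.2]; exact t2)

lemma exists_mid {X N : Type*} {T : I → I → I} (hT : IsTnorm T)
    (R : N → LinPref T X) (x y u v : X) (huv : u ≠ v)
    (hmin : ∀ i, min ((R i).1 x y) ((R i).1 y x) < 1) :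
    ∃ Q : N → LinPref T X, ∀ i, (Q i).1 u v = (R i).1 x y ∧ (Q i).1 v u = (R i).1 y x := by
  classical
  refine ⟨fun i => if (R i).1 x y = 1 then rankPref T hT (rk3 u v v) ((R i).1 y x)
    else rankPref T hT (rk3 v u u) ((R i).1 x y), fun i => ?_⟩
  beta_reduce
  rcases dichot (R i) (hmin i) with ⟨hp, hq⟩ | ⟨hq, hp⟩
  · rw [if_pos hp]
    constructor <;> simp [rk3, huv, Ne.symm huv, hp, hq]
  · rw [if_neg hp.ne]
    constructor <;> simp [rk3, huv, Ne.symm huv, hp, hq]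

/-- Proposition `neutrality`: an IIA, weakly Paretian aggregation function is
neutral: if two pairs carry the same (not fully indifferent) individual degrees, the social
degrees coincide. -/
theorem neutrality {X N : Type*} (hX : ∃ x y z : X, x ≠ y ∧ x ≠ z ∧ y ≠ z) [Nonempty N]
    (T : I → I → I) (hT : IsTnorm T)
    (f : (N → LinPref T X) → LinPref T X) (hIIA : IIA f) (hWP : WeakPareto f)
    (R R' : N → LinPref T X) (a b x y : X)
    (h : ∀ i : N, (R i).1 x y = (R' i).1 a b ∧ (R i).1 y x = (R' i).1 b a ∧
      min ((R i).1 x y) ((R i).1 y x) < 1) :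
    (f R).1 x y = (f R').1 a b ∧ (f R).1 y x = (f R').1 b a := by
  classical
  have i0 : N := Classical.arbitrary N
  have hmin : ∀ i, min ((R i).1 x y) ((R i).1 y x) < 1 := fun i => (h i).2.2
  have hxy : x ≠ y := by
    rintro rfl
    have := hmin i0
    rw [(R i0).2.1 x] at this
    simp at this
  have hab : a ≠ b := by
    rintro rfl
    obtain ⟨h1, h2, h3⟩ := h i0
    rw [(R' i0).2.1 a] at h1 h2
    rw [h1, h2] at h3
    simp at h3
  by_cases hax : a = x
  · by_cases hby : b = y
    · rw [hax, hby] at h ⊢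
      exact hIIA R R' x y fun i => ⟨(h i).1, (h i).2.1⟩
    · rw [hax] at h hab ⊢
      exact baseA hT f hIIA hWP R R' x y b hxy hab (fun hh => hby hh.symm)
        fun i => ⟨(h i).1, (h i).2.1, (h i).2.2⟩
  · by_cases hby : b = y
    · rw [hby] at h hab ⊢
      exact baseB hT f hIIA hWP R R' x y a hxy hax hab
        fun i => ⟨(h i).1, (h i).2.1, (h i).2.2⟩
    · by_cases hay : a = y
      · by_cases hbx : b = x
        · -- swap case : (a, b) = (y, x)
          rw [hay, hbx] at h ⊢
          have hz : ∃ z : X, z ≠ x ∧ z ≠ y := by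
            obtain ⟨u, v, w, huv, huw, hvw⟩ := hX
            by_cases h1 : u ≠ x ∧ u ≠ y
            · exact ⟨u, h1⟩
            by_cases h2 : v ≠ x ∧ v ≠ y
            · exact ⟨v, h2⟩
            by_cases h3 : w ≠ x ∧ w ≠ y
            · exact ⟨w, h3⟩
            push_neg at h1 h2 h3
            have hu : u = x ∨ u = y := by
              by_cases hux : u = x
              · exact Or.inl hux
              · exact Or.inr (h1 hux)
            have hv : v = x ∨ v = y := by
              by_cases hvx : v = x
              · exact Or.inl hvx
              · exact Or.inr (h2 hvx)
            have hw : w = x ∨ w = y := by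
              by_cases hwx : w = x
              · exact Or.inl hwx
              · exact Or.inr (h3 hwx)
            rcases hu with rfl | rfl <;> rcases hv with rfl | rfl <;>
              rcases hw with rfl | rfl <;> simp_all
          obtain ⟨z, hzx, hzy⟩ := hz
          obtain ⟨Q1, hQ1⟩ := exists_mid hT R x y z y hzy hmin
          obtain ⟨Q2, hQ2⟩ := exists_mid hT R x y z x hzx hmin
          have minQ1 : ∀ i, min ((Q1 i).1 z y) ((Q1 i).1 y z) < 1 := fun i => by
            rw [(hQ1 i).1, (hQ1 i).2]; exact hmin i
          have minQ2 : ∀ i, min ((Q2 i).1 z x) ((Q2 i).1 x z) < 1 := fun i => by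
            rw [(hQ2 i).1, (hQ2 i).2]; exact hmin i
          have s1 := baseB hT f hIIA hWP R Q1 x y z hxy hzx hzy
            fun i => ⟨(hQ1 i).1.symm, (hQ1 i).2.symm, hmin i⟩
          have s2 := baseA hT f hIIA hWP Q1 Q2 z y x hzy hzx (Ne.symm hxy)
            fun i => ⟨(hQ1 i).1.trans (hQ2 i).1.symm, (hQ1 i).2.trans (hQ2 i).2.symm, minQ1 i⟩
          have s3 := baseB hT f hIIA hWP Q2 R' z x y hzx (Ne.symm hzy) (Ne.symm hxy)
            fun i => ⟨(hQ2 i).1.trans (h i).1, (hQ2 i).2.trans (h i).2.1, minQ2 i⟩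
          exact ⟨s1.1.trans (s2.1.trans s3.1), s1.2.trans (s2.2.trans s3.2)⟩
        · -- a = y, b ∉ {x, y}
          rw [hay] at h ⊢
          have hxb : x ≠ b := fun hh => hbx hh.symm
          have hyb : y ≠ b := fun hh => hby hh.symm
          obtain ⟨Q, hQ⟩ := exists_mid hT R x y x b hxb hmin
          have minQ : ∀ i, min ((Q i).1 x b) ((Q i).1 b x) < 1 := fun i => by
            rw [(hQ i).1, (hQ i).2]; exact hmin i
          have s1 := baseA hT f hIIA hWP R Q x y b hxy hxb hyb
            fun i => ⟨(hQ i).1.symm, (hQ i).2.symm, hmin i⟩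
          have s2 := baseB hT f hIIA hWP Q R' x b y hxb (Ne.symm hxy) hyb
            fun i => ⟨(hQ i).1.trans (h i).1, (hQ i).2.trans (h i).2.1, minQ i⟩
          exact ⟨s1.1.trans s2.1, s1.2.trans s2.2⟩
      · by_cases hbx : b = x
        · -- b = x, a ∉ {x, y}
          rw [hbx] at h ⊢
          obtain ⟨Q, hQ⟩ := exists_mid hT R x y a y hay hmin
          have minQ : ∀ i, min ((Q i).1 a y) ((Q i).1 y a) < 1 := fun i => by
            rw [(hQ i).1, (hQ i).2]; exact hmin i
          have s1 := baseB hT f hIIA hWP R Q x y a hxy hax hay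
            fun i => ⟨(hQ i).1.symm, (hQ i).2.symm, hmin i⟩
          have s2 := baseA hT f hIIA hWP Q R' a y x hay hax (Ne.symm hxy)
            fun i => ⟨(hQ i).1.trans (h i).1, (hQ i).2.trans (h i).2.1, minQ i⟩
          exact ⟨s1.1.trans s2.1, s1.2.trans s2.2⟩
        · -- b ∉ {x, y}, a ∉ {x, y}
          have hxb : x ≠ b := fun hh => hbx hh.symm
          have hyb : y ≠ b := fun hh => hby hh.symm
          obtain ⟨Q, hQ⟩ := exists_mid hT R x y x b hxb hmin
          have minQ : ∀ i, min ((Q i).1 x b) ((Q i).1 b x) < 1 := fun i => by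
            rw [(hQ i).1, (hQ i).2]; exact hmin i
          have s1 := baseA hT f hIIA hWP R Q x y b hxy hxb hyb
            fun i => ⟨(hQ i).1.symm, (hQ i).2.symm, hmin i⟩
          have s2 := baseB hT f hIIA hWP Q R' x b a hxb hax hab
            fun i => ⟨(hQ i).1.trans (h i).1, (hQ i).2.trans (h i).2.1, minQ i⟩
          exact ⟨s1.1.trans s2.1, s1.2.trans s2.2⟩
end

section
/- Let X have at least 3 elements, T a t-norm, N a nonempty society, P a strict preference operator, and 𝔘 an ultrafilter on N. Then there exists an aggregation function f : LP_T^N → LP_T satisfying independence of irrelevant alternatives and strongly Paretian with respect to P whose set of decisive coalitions is exactly 𝔘. In particular, the function defined by f(𝐑)(x,y) = 1 if {i ∈ N : x ≻_{R_i} y} ∈ 𝔘, f(𝐑)(x,y) = 0 if {i ∈ N : y ≻_{R_i} x} ∈ 𝔘, and f(𝐑)(x,y) = 1 otherwise, maps every profile to a T-linear preference and has these properties. -/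
open unitInterval

/-- A strict preference operator: assigns to each fuzzy preference `R` a fuzzy strict
preference `P R`, satisfying the three properties required in the paper. -/
def IsSPO {X : Type*} (P : (X → X → I) → X → X → I) : Prop :=
  (∀ (R : X → X → I) (x y : X), R x y = 1 → R y x = 0 → P R x y = 1) ∧
  (∀ (R : X → X → I) (x y : X), 0 < P R x y ↔ R y x < R x y) ∧
  (∀ (R R' : X → X → I) (x y a b : X),
    R' a b ≤ R x y → R y x ≤ R' b a → P R' a b ≤ P R x y)

/-- Strong Pareto with respect to a strict preference operator `P`. -/
def StrongPareto {X N : Type*} {T : I → I → I} (P : (X → X → I) → X → X → I)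
    (f : (N → LinPref T X) → LinPref T X) : Prop :=
  ∀ (R : N → LinPref T X) (x y : X),
    ⨅ i : N, (P (R i).1 x y : ℝ) ≤ (P (f R).1 x y : ℝ)

open scoped Classical

/-!
The rule declares `x` socially strictly above `y` exactly when the coalition of individuals
strictly preferring `x` to `y` lies in `𝔘`. Each individual strict preference is asymmetric and
negatively transitive (`z ≻ x` forces `z ≻ y` or `y ≻ x`), and since an ultrafilter contains
the union of two sets only if it contains one of them, the social strict relation inherits both
properties; the crisp preference it induces is then `T`-linear for every t-norm. Decisiveness of
`C` amounts to `C ∈ 𝔘` by using profiles in which `C` puts `x` on top and its complement puts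
`y` on top.
-/

namespace IsTnorm

variable {T : I → I → I}

lemma one_one (hT : IsTnorm T) : T 1 1 = 1 := hT.2.2.2 1

lemma zero_right (hT : IsTnorm T) (a : I) : T a 0 = 0 :=
  le_antisymm
    (calc T a 0 ≤ T 1 0 := hT.2.2.1 a 1 0 0 le_one' le_rfl
      _ = T 0 1 := hT.1 1 0
      _ = 0 := hT.2.2.2 0)
    nonneg'

lemma zero_left (hT : IsTnorm T) (a : I) : T 0 a = 0 := by
  rw [hT.1, hT.zero_right]

end IsTnorm

section Preferences

variable {X : Type*}

lemma FuzzyComplete.sp_iff {R : X → X → I} (hR : FuzzyComplete R) {x y : X} :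
    SP R x y ↔ R y x < 1 :=
  ⟨And.right, fun h => ⟨(hR x y).resolve_right h.ne, h⟩⟩

lemma FuzzyComplete.le_of_not_sp {R : X → X → I} (hR : FuzzyComplete R) {x y : X}
    (h : ¬ SP R x y) : R x y ≤ R y x := by
  rw [hR.sp_iff, not_lt] at h
  exact le_one'.trans h

lemma IsLinearPref.sp_or_sp_of_sp {T : I → I → I} (hT : IsTnorm T) {R : X → X → I}
    (hR : IsLinearPref T R) {a b c : X} (h : SP R a c) : SP R a b ∨ SP R b c := by
  by_contra! hab
  simp only [hR.2.1.sp_iff, not_lt] at h hab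
  have hca := hR.2.2 c b a
  rw [le_antisymm le_one' hab.2, le_antisymm le_one' hab.1, hT.one_one] at hca
  exact h.not_ge hca

lemma IsSPO.eq_zero_of_le {P : (X → X → I) → X → X → I} (hP : IsSPO P) {R : X → X → I}
    {x y : X} (h : R x y ≤ R y x) : P R x y = 0 :=
  le_antisymm (not_lt.mp fun hpos => h.not_gt ((hP.2.1 R x y).mp hpos)) nonneg'

/-- The crisp preference whose strict part is `s`: `a` is weakly preferred to `b` unless
`s b a`. -/
noncomputable def crispPref (s : X → X → Prop) : X → X → I :=
  fun a b => if s b a then 0 else 1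

variable {s : X → X → Prop}

lemma isLinearPref_crispPref {T : I → I → I} (hT : IsTnorm T)
    (asymm : ∀ a b, s a b → ¬ s b a) (negTrans : ∀ a b c, s a c → s a b ∨ s b c) :
    IsLinearPref T (crispPref s) := by
  refine ⟨fun a => if_neg fun h => asymm a a h h, fun a b => ?_, fun a b c => ?_⟩
  · by_cases h : s b a
    · exact .inr (if_neg (asymm b a h))
    · exact .inl (if_neg h)
  · by_cases hca : s c a
    · rcases negTrans c b a hca with hcb | hba
      · simp only [crispPref, hca, hcb, if_true, hT.zero_right, le_refl]
      · simp only [crispPref, hca, hba, if_true, hT.zero_left, le_refl]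
    · simp only [crispPref, hca, if_false, le_one']

lemma sp_crispPref_iff (asymm : ∀ a b, s a b → ¬ s b a) {x y : X} :
    SP (crispPref s) x y ↔ s x y := by
  unfold SP crispPref
  by_cases h : s x y
  · simp [h, asymm x y h]
  · simp [h]

noncomputable def topPref (t : X) : X → X → I :=
  crispPref fun a b => a = t ∧ b ≠ t

lemma topPref_asymm (t : X) (a b : X) : a = t ∧ b ≠ t → ¬ (b = t ∧ a ≠ t) :=
  fun h h' => h'.2 h.1

lemma isLinearPref_topPref {T : I → I → I} (hT : IsTnorm T) (t : X) :
    IsLinearPref T (topPref t) := by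
  refine isLinearPref_crispPref hT (topPref_asymm t) fun a b c h => ?_
  by_cases hb : b = t
  · exact .inr ⟨hb, h.2⟩
  · exact .inl ⟨h.1, hb⟩

lemma sp_topPref_iff (t : X) {x y : X} : SP (topPref t) x y ↔ x = t ∧ y ≠ t :=
  sp_crispPref_iff (topPref_asymm t)

end Preferences

lemma iInf_coe_le_of_le {N : Type*} {g : N → I} {c : ℝ} (i : N) (h : (g i : ℝ) ≤ c) :
    ⨅ j, (g j : ℝ) ≤ c :=
  ciInf_le_of_le ⟨0, by rintro _ ⟨j, rfl⟩; exact (g j).2.1⟩ i h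

namespace Ultrafilter

variable {X N : Type*} (𝔘 : Ultrafilter N) {r : N → X → X → Prop}

lemma setOf_notMem_of_asymm (asymm : ∀ i a b, r i a b → ¬ r i b a) {a b : X}
    (h : {i | r i a b} ∈ 𝔘) : {i | r i b a} ∉ 𝔘 := fun h' =>
  have hdisj : {i | r i a b} ∩ {i | r i b a} = ∅ :=
    Set.eq_empty_of_forall_notMem fun i hi => asymm i a b hi.1 hi.2
  𝔘.empty_notMem (hdisj ▸ 𝔘.inter_mem h h')

lemma setOf_mem_or_mem_of_negTrans (negTrans : ∀ i a b c, r i a c → r i a b ∨ r i b c)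
    {a b c : X} (h : {i | r i a c} ∈ 𝔘) : {i | r i a b} ∈ 𝔘 ∨ {i | r i b c} ∈ 𝔘 :=
  Ultrafilter.union_mem_iff.mp <| 𝔘.mem_of_superset h fun i hi => negTrans i a b c hi

end Ultrafilter

section UltrafilterRule

variable {X N : Type*} {T : I → I → I} (𝔘 : Ultrafilter N)

def strictCoalition (R : N → LinPref T X) (a b : X) : Set N := {i | SP (R i).1 a b}

lemma strictCoalition_asymm (R : N → LinPref T X) {a b : X}
    (h : strictCoalition R a b ∈ 𝔘) : strictCoalition R b a ∉ 𝔘 :=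
  𝔘.setOf_notMem_of_asymm (fun _ _ _ h h' => h'.2.ne h.1) h

lemma strictCoalition_mem_or_mem (hT : IsTnorm T) (R : N → LinPref T X)
    {a b c : X} (h : strictCoalition R a c ∈ 𝔘) :
    strictCoalition R a b ∈ 𝔘 ∨ strictCoalition R b c ∈ 𝔘 :=
  𝔘.setOf_mem_or_mem_of_negTrans (r := fun i a b => SP (R i).1 a b)
    (fun i _ _ _ => (R i).2.sp_or_sp_of_sp hT) h

variable (hT : IsTnorm T)

noncomputable def ultraAgg (R : N → LinPref T X) : LinPref T X :=
  ⟨crispPref fun a b => strictCoalition R a b ∈ 𝔘,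
    isLinearPref_crispPref hT (fun _ _ => strictCoalition_asymm 𝔘 R)
      (fun _ _ _ => strictCoalition_mem_or_mem 𝔘 hT R)⟩

lemma sp_ultraAgg_iff (R : N → LinPref T X) {x y : X} :
    SP (ultraAgg 𝔘 hT R).1 x y ↔ strictCoalition R x y ∈ 𝔘 :=
  sp_crispPref_iff fun _ _ => strictCoalition_asymm 𝔘 R

lemma ultraAgg_apply (R : N → LinPref T X) (x y : X) :
    (ultraAgg 𝔘 hT R).1 x y =
      if strictCoalition R x y ∈ 𝔘 then 1
      else if strictCoalition R y x ∈ 𝔘 then 0 else 1 := by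
  by_cases h : strictCoalition R x y ∈ 𝔘
  · simp [ultraAgg, crispPref, h, strictCoalition_asymm 𝔘 R h]
  · simp [ultraAgg, crispPref, h]

lemma ultraAgg_iia : IIA (ultraAgg (X := X) 𝔘 hT) := by
  intro R R' x y h
  have hxy : strictCoalition R x y = strictCoalition R' x y := by
    ext i; simp only [strictCoalition, SP, Set.mem_ofPred_eq, (h i).1, (h i).2]
  have hyx : strictCoalition R y x = strictCoalition R' y x := by
    ext i; simp only [strictCoalition, SP, Set.mem_ofPred_eq, (h i).1, (h i).2]
  simp only [ultraAgg_apply, hxy, hyx, and_self]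

lemma ultraAgg_strongPareto {P : (X → X → I) → X → X → I} (hP : IsSPO P) :
    StrongPareto P (ultraAgg 𝔘 hT) := by
  intro R x y
  by_cases h : strictCoalition R x y ∈ 𝔘
  · obtain ⟨i, -⟩ := 𝔘.nonempty_of_mem h
    have hF := (sp_ultraAgg_iff 𝔘 hT R).mpr h
    have hFyx : (ultraAgg 𝔘 hT R).1 y x = 0 := by
      simpa [ultraAgg_apply, h] using strictCoalition_asymm 𝔘 R h
    rw [hP.1 _ x y hF.1 hFyx]
    exact iInf_coe_le_of_le i (P (R i).1 x y).2.2
  · obtain ⟨i, hi⟩ := 𝔘.nonempty_of_mem (𝔘.compl_mem_iff_notMem.mpr h)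
    have hPi := hP.eq_zero_of_le ((R i).2.2.1.le_of_not_sp hi)
    exact iInf_coe_le_of_le i (by rw [hPi]; exact (P _ x y).2.1)

lemma decisive_ultraAgg_iff [Nontrivial X] (C : Set N) :
    Decisive (ultraAgg (X := X) 𝔘 hT) C ↔ C ∈ 𝔘 := by
  refine ⟨fun hD => ?_, fun hC x y R hCxy _ => ?_⟩
  · obtain ⟨x, y, hxy⟩ := exists_pair_ne X
    let R : N → LinPref T X := fun i =>
      ⟨topPref (if i ∈ C then x else y), isLinearPref_topPref hT _⟩
    have hRC : strictCoalition R x y = C := by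
      ext i
      by_cases hi : i ∈ C <;> simp [strictCoalition, R, sp_topPref_iff, hi, hxy, hxy.symm]
    have hSP := hD x y R
      (fun i hi => by simp [R, sp_topPref_iff, hi, hxy.symm])
      (fun i hi => by simp_all [R, sp_topPref_iff])
    rwa [sp_ultraAgg_iff, hRC] at hSP
  · exact (sp_ultraAgg_iff 𝔘 hT R).mpr (𝔘.mem_of_superset hC hCxy)

end UltrafilterRule

theorem aggregation_from_ultrafilter_general {X N : Type*}
    (hX : ∃ x y z : X, x ≠ y ∧ x ≠ z ∧ y ≠ z)
    (T : I → I → I) (hT : IsTnorm T)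
    (P : (X → X → I) → X → X → I) (hP : IsSPO P)
    (𝔘 : Ultrafilter N) :
    ∃ f : (N → LinPref T X) → LinPref T X,
      IIA f ∧ StrongPareto P f ∧
      (∀ C : Set N, Decisive f C ↔ C ∈ 𝔘) ∧
      (∀ (R : N → LinPref T X) (x y : X),
        (f R).1 x y =
          if {i : N | SP (R i).1 x y} ∈ 𝔘 then 1
          else if {i : N | SP (R i).1 y x} ∈ 𝔘 then 0 else 1) := by
  obtain ⟨x, y, -, hxy, -⟩ := hX
  have : Nontrivial X := ⟨x, y, hxy⟩
  exact ⟨ultraAgg 𝔘 hT, ultraAgg_iia 𝔘 hT, ultraAgg_strongPareto 𝔘 hT hP,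
    decisive_ultraAgg_iff 𝔘 hT, ultraAgg_apply 𝔘 hT⟩

/-- Theorem `existenceFromU`: every ultrafilter `𝔘` on `N` is the set of
decisive coalitions of some IIA, strongly Paretian aggregation function; in particular the
explicit crisp rule described in the paper works. -/
theorem aggregation_from_ultrafilter {X N : Type*}
    (hX : ∃ x y z : X, x ≠ y ∧ x ≠ z ∧ y ≠ z) [Nonempty N]
    (T : I → I → I) (hT : IsTnorm T)
    (P : (X → X → I) → X → X → I) (hP : IsSPO P)
    (𝔘 : Ultrafilter N) :
    ∃ f : (N → LinPref T X) → LinPref T X,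
      IIA f ∧ StrongPareto P f ∧
      (∀ C : Set N, Decisive f C ↔ C ∈ 𝔘) ∧
      (∀ (R : N → LinPref T X) (x y : X),
        (f R).1 x y =
          if {i : N | SP (R i).1 x y} ∈ 𝔘 then 1
          else if {i : N | SP (R i).1 y x} ∈ 𝔘 then 0 else 1) :=
  aggregation_from_ultrafilter_general hX T hT P hP 𝔘
end
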